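/- Let d ≥ 2 be an integer and set N_d = 2^(d/2) if d is even and N_d = 2^((d-1)/2) if d is odd. Let x = (x⁰, 𝐱) : ℝ → ℝ × ℝ^(d-1) be a smooth map, let χ : ℝ → ℝ be smooth and compactly supported, and let Ω ∈ ℝ. For ε > 0 define the regularized Dirac-detector response F_D^ε(Ω) = (N_d Γ(d/2)² / (4π^d)) ∫∫ χ(τ)χ(τ') e^(−iΩ(τ−τ')) [ |𝐱(τ)−𝐱(τ')|² − (x⁰(τ)−x⁰(τ')−iε)² ]^(−(d−1)) dτ dτ', and, for the isometrically embedded worldline X(τ) = (x⁰(τ), 𝐱(τ), 0) ∈ ℝ × ℝ^(2d−1), the regularized scalar-detector response in 2d spacetime dimensions F_sc^ε(Ω) = (Γ(d−1) / (4π^d)) ∫∫ χ(τ)χ(τ') e^(−iΩ(τ−τ')) [ |X_spatial(τ)−X_spatial(τ')|² − (x⁰(τ)−x⁰(τ')−iε)² ]^(−(d−1)) dτ dτ', where X_spatial ∈ ℝ^(2d−1) denotes the spatial part of X. Then for every ε > 0 one has F_D^ε(Ω) = (N_d Γ(d/2)² / Γ(d−1)) · F_sc^ε(Ω); consequently, whenever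 the limit ε → 0⁺ of one side exists, so does that of the other, and the limits satisfy the same proportionality. -/

import Mathlib

open MeasureTheory Filter
open scoped Topology

/-- The dimension `N_d` of the Dirac spinor representation in `d` spacetime dimensions. -/
noncomputable def diracDim (d : ℕ) : ℕ := if Even d then 2 ^ (d / 2) else 2 ^ ((d - 1) / 2)

lemma embed_norm (d : ℕ) (a : EuclideanSpace ℝ (Fin (d - 1)))
    (b : EuclideanSpace ℝ (Fin (2 * d - 1)))
    (hb : b = fun i : Fin (2 * d - 1) => if h : (i : ℕ) < d - 1 then a ⟨(i : ℕ), h⟩ else 0) :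
    ‖b‖ = ‖a‖ := by
  rw [EuclideanSpace.norm_eq, EuclideanSpace.norm_eq]
  congr 1
  simp only [hb]
  set f : ℕ → ℝ := fun i => if h : i < d - 1 then ‖a ⟨i, h⟩‖ ^ 2 else 0 with hf
  have h1 : ∑ i : Fin (2 * d - 1),
      ‖if h : (i : ℕ) < d - 1 then a ⟨(i : ℕ), h⟩ else 0‖ ^ 2
      = ∑ i : Fin (2 * d - 1), f (i : ℕ) := by
    apply Finset.sum_congr rfl
    intro i _
    by_cases h : (i : ℕ) < d - 1 <;> simp [hf, h]
  have h2 : ∑ i : Fin (d - 1), ‖a i‖ ^ 2 = ∑ i : Fin (d - 1), f (i : ℕ) := by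
    apply Finset.sum_congr rfl
    intro i _
    simp [hf, i.isLt]
  rw [h1, h2, Fin.sum_univ_eq_sum_range f, Fin.sum_univ_eq_sum_range f]
  apply (Finset.sum_subset (Finset.range_subset_range.2 (by omega : d - 1 ≤ 2 * d - 1)) _).symm
  intro i _ hi
  simp only [Finset.mem_range] at hi
  exact dif_neg (by omega)


/-- **Theorem 1.** The response function of an Unruh-DeWitt detector coupled quadratically to a
massless Dirac field in Minkowski vacuum in `d ≥ 2` spacetime dimensions equals
`N_d Γ(d/2)² / Γ(d−1)` times the response function of a detector coupled linearly to a massless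
scalar field in Minkowski vacuum in `2d` spacetime dimensions, on the isometrically embedded
worldline; moreover the `ε → 0⁺` limits, when they exist, satisfy the same proportionality. -/
theorem dirac_detector_response_eq_scalar_response_in_double_dimension
    (d : ℕ) (hd : 2 ≤ d)
    (x : ℝ → ℝ × EuclideanSpace ℝ (Fin (d - 1))) (hx : ContDiff ℝ (⊤ : ℕ∞) x)
    (χ : ℝ → ℝ) (hχ : ContDiff ℝ (⊤ : ℕ∞) χ) (hχc : HasCompactSupport χ)
    (Ω : ℝ)
    (FD Fsc : ℝ → ℂ)
    (hFD : ∀ ε > (0 : ℝ), FD ε =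
      ((diracDim d : ℂ) * ((Real.Gamma ((d : ℝ) / 2) : ℂ)) ^ 2 / (4 * (Real.pi : ℂ) ^ d)) *
        ∫ τ : ℝ, ∫ τ' : ℝ,
          ((χ τ * χ τ' : ℝ) : ℂ) * Complex.exp (-Complex.I * Ω * ((τ : ℂ) - τ')) *
            ((((‖(x τ).2 - (x τ').2‖ ^ 2 : ℝ)) : ℂ)
              - (((x τ).1 : ℂ) - ((x τ').1 : ℂ) - Complex.I * ε) ^ 2) ^ (-((d : ℤ) - 1)))
    (X : ℝ → EuclideanSpace ℝ (Fin (2 * d - 1)))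
    (hX : ∀ τ, X τ = fun i : Fin (2 * d - 1) =>
      if h : (i : ℕ) < d - 1 then (x τ).2 ⟨(i : ℕ), h⟩ else 0)
    (hFsc : ∀ ε > (0 : ℝ), Fsc ε =
      ((Real.Gamma ((d : ℝ) - 1) : ℂ) / (4 * (Real.pi : ℂ) ^ d)) *
        ∫ τ : ℝ, ∫ τ' : ℝ,
          ((χ τ * χ τ' : ℝ) : ℂ) * Complex.exp (-Complex.I * Ω * ((τ : ℂ) - τ')) *
            ((((‖X τ - X τ'‖ ^ 2 : ℝ)) : ℂ)
              - (((x τ).1 : ℂ) - ((x τ').1 : ℂ) - Complex.I * ε) ^ 2) ^ (-((d : ℤ) - 1))) :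
    (∀ ε > (0 : ℝ), FD ε =
        ((diracDim d : ℂ) * ((Real.Gamma ((d : ℝ) / 2) : ℂ)) ^ 2 / (Real.Gamma ((d : ℝ) - 1) : ℂ))
          * Fsc ε)
    ∧ (∀ l : ℂ, Tendsto Fsc (𝓝[>] 0) (𝓝 l) →
        Tendsto FD (𝓝[>] 0) (𝓝
          (((diracDim d : ℂ) * ((Real.Gamma ((d : ℝ) / 2) : ℂ)) ^ 2
            / (Real.Gamma ((d : ℝ) - 1) : ℂ)) * l)))
    ∧ (∀ l : ℂ, Tendsto FD (𝓝[>] 0) (𝓝 l) →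
        Tendsto Fsc (𝓝[>] 0) (𝓝
          (l / ((diracDim d : ℂ) * ((Real.Gamma ((d : ℝ) / 2) : ℂ)) ^ 2
            / (Real.Gamma ((d : ℝ) - 1) : ℂ))))) := by
  set C : ℂ := (diracDim d : ℂ) * ((Real.Gamma ((d : ℝ) / 2) : ℂ)) ^ 2
      / (Real.Gamma ((d : ℝ) - 1) : ℂ) with hC
  -- norms agree
  have hnorm : ∀ τ τ' : ℝ, ‖X τ - X τ'‖ = ‖(x τ).2 - (x τ').2‖ := by
    intro τ τ'
    apply embed_norm d
    rw [WithLp.ofLp_sub, hX τ, hX τ']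
    funext i
    by_cases h : (i : ℕ) < d - 1 <;> simp [h, PiLp.sub_apply]
  have hΓ1 : ((Real.Gamma ((d : ℝ) - 1) : ℂ)) ≠ 0 := by
    rw [Complex.ofReal_ne_zero]
    exact (Real.Gamma_pos_of_pos (by
      have : (2 : ℝ) ≤ d := by exact_mod_cast hd
      linarith)).ne'
  have hΓ2 : ((Real.Gamma ((d : ℝ) / 2) : ℂ)) ≠ 0 := by
    rw [Complex.ofReal_ne_zero]
    exact (Real.Gamma_pos_of_pos (by positivity : (0:ℝ) < (d : ℝ) / 2)).ne'
  have hN : (diracDim d : ℂ) ≠ 0 := by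
    have : diracDim d ≠ 0 := by
      unfold diracDim; split <;> positivity
    exact_mod_cast this
  have hCne : C ≠ 0 := div_ne_zero (mul_ne_zero hN (pow_ne_zero 2 hΓ2)) hΓ1
  have key : ∀ ε > (0 : ℝ), FD ε = C * Fsc ε := by
    intro ε hε
    rw [hFD ε hε, hFsc ε hε]
    have : (∫ τ : ℝ, ∫ τ' : ℝ,
          ((χ τ * χ τ' : ℝ) : ℂ) * Complex.exp (-Complex.I * Ω * ((τ : ℂ) - τ')) *
            ((((‖X τ - X τ'‖ ^ 2 : ℝ)) : ℂ)
              - (((x τ).1 : ℂ) - ((x τ').1 : ℂ) - Complex.I * ε) ^ 2) ^ (-((d : ℤ) - 1)))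
        = (∫ τ : ℝ, ∫ τ' : ℝ,
          ((χ τ * χ τ' : ℝ) : ℂ) * Complex.exp (-Complex.I * Ω * ((τ : ℂ) - τ')) *
            ((((‖(x τ).2 - (x τ').2‖ ^ 2 : ℝ)) : ℂ)
              - (((x τ).1 : ℂ) - ((x τ').1 : ℂ) - Complex.I * ε) ^ 2) ^ (-((d : ℤ) - 1))) := by
      congr 1; funext τ; congr 1; funext τ'; rw [hnorm]
    rw [this, ← mul_assoc]
    congr 1
    rw [hC]
    field_simp
  refine ⟨key, fun l hl => ?_, fun l hl => ?_⟩
  · have hev : (fun ε => C * Fsc ε) =ᶠ[𝓝[>] (0:ℝ)] FD := by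
      filter_upwards [self_mem_nhdsWithin] with ε hε
      exact (key ε hε).symm
    exact Tendsto.congr' hev (hl.const_mul C)
  · have hev : (fun ε => FD ε / C) =ᶠ[𝓝[>] (0:ℝ)] Fsc := by
      filter_upwards [self_mem_nhdsWithin] with ε hε
      rw [key ε hε, mul_div_cancel_left₀ _ hCne]
    exact Tendsto.congr' hev (hl.div_const C)
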